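/- arXiv:2506.11817 — 2 statements merged into one kernel-verified Lean document; each statement's English description precedes it below -/
import Mathlib

section
/- Let H be a real inner product space, let n ≥ 0, and let φ^0, …, φ^{n+1} ∈ H and r^{-1/2}, r^{1/2}, …, r^{n+1/2} be real-valued functions (elements of an L² space over a measure space Ω) together with μ^{k+1/2} satisfying, for each 0 ≤ k ≤ n: μ^{k+1/2} = -ε²Δ((φ^k+φ^{k+1})/2) + (r^{k+1/2}+S)(φ^k+φ^{k+1})/2 and (r^{k+1/2}+r^{k-1/2})/2 = (φ^k)² - 1 - S. Then the discrete energy identity ⟨φ^{k+1} - φ^k, μ^{k+1/2}⟩ = Ẽ(φ^{k+1}, r^{k+1/2}) - Ẽ(φ^k, r^{k-1/2}) holds for each k, where Ẽ(φ, r) = ∫_Ω [ (ε²/2)|∇φ|² + (1/2)(r+S)(φ² - 1 - S) - (1/4)r² ] dx + (S²/4)|Ω|, assuming the integration-by-parts identity ⟨-Δu, v⟩ = ⟨∇u, ∇v⟩ holds. -/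
open scoped InnerProductSpace

/-- The discrete modified energy `Ẽ(φ, r)` in an abstract finite-dimensional setting:
`grad` plays the role of `∇`, sums over `ι` play the role of integrals over `Ω`,
and `vol` is the measure `|Ω|` of the domain. -/
noncomputable def modifiedEnergy {ι : Type*} [Fintype ι] {H : Type*} [NormedAddCommGroup H]
    [InnerProductSpace ℝ H] (grad : (ι → ℝ) →ₗ[ℝ] H) (ε S vol : ℝ)
    (φ r : ι → ℝ) : ℝ :=
  (ε ^ 2 / 2) * ⟪grad φ, grad φ⟫_ℝ +
    ∑ i, ((1 / 2) * (r i + S) * ((φ i) ^ 2 - 1 - S) - (1 / 4) * (r i) ^ 2) +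
    (S ^ 2 / 4) * vol

/-- Discrete energy identity (equation (proof2)); here `r k` denotes `r^{k-1/2}`,
`μ k` denotes `μ^{k+1/2}`, `Δ` is the discrete Laplacian, and the
integration-by-parts identity `⟨-Δu, v⟩ = ⟨∇u, ∇v⟩` is assumed. -/
theorem stmt_9 {ι : Type*} [Fintype ι] {H : Type*} [NormedAddCommGroup H]
    [InnerProductSpace ℝ H]
    (ε S vol : ℝ) (n : ℕ) (φ r μ : ℕ → ι → ℝ)
    (Δ : (ι → ℝ) →ₗ[ℝ] (ι → ℝ)) (grad : (ι → ℝ) →ₗ[ℝ] H)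
    (ibp : ∀ u v : ι → ℝ, ∑ i, (-Δ u i) * v i = ⟪grad u, grad v⟫_ℝ)
    (hμ : ∀ k ≤ n, ∀ i, μ k i =
      -ε ^ 2 * Δ (fun j => (φ k j + φ (k + 1) j) / 2) i
        + (r (k + 1) i + S) * ((φ k i + φ (k + 1) i) / 2))
    (hr : ∀ k ≤ n, ∀ i, (r (k + 1) i + r k i) / 2 = (φ k i) ^ 2 - 1 - S) :
    ∀ k ≤ n, ∑ i, (φ (k + 1) i - φ k i) * μ k i =
      modifiedEnergy grad ε S vol (φ (k + 1)) (r (k + 1)) -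
        modifiedEnergy grad ε S vol (φ k) (r k) := by
  intro k hk
  set avg : ι → ℝ := fun j => (φ k j + φ (k + 1) j) / 2 with havg
  have key : ∀ i, (φ (k + 1) i - φ k i) * μ k i =
      ε ^ 2 * ((-Δ avg i) * (φ (k + 1) i - φ k i))
      + ((1 / 2) * (r (k + 1) i + S) * ((φ (k + 1) i) ^ 2 - 1 - S)
          - (1 / 4) * (r (k + 1) i) ^ 2
        - ((1 / 2) * (r k i + S) * ((φ k i) ^ 2 - 1 - S) - (1 / 4) * (r k i) ^ 2)) := by
    intro i
    have h1 := hμ k hk i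
    have h2 := hr k hk i
    rw [h1]
    linear_combination ((r (k + 1) i - r k i) / 2) * h2
  rw [Finset.sum_congr rfl (fun i _ => key i), Finset.sum_add_distrib,
    Finset.sum_sub_distrib, ← Finset.mul_sum]
  have hibp : ∑ i, (-Δ avg i) * (φ (k + 1) i - φ k i)
      = ⟪grad avg, grad (fun j => φ (k + 1) j - φ k j)⟫_ℝ := ibp avg _
  rw [hibp]
  have hsub : (fun j => φ (k + 1) j - φ k j) = φ (k + 1) - φ k := rfl
  have havg2 : avg = (2⁻¹ : ℝ) • (φ k + φ (k + 1)) := by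
    funext j
    simp [havg, Pi.smul_apply]
    ring
  rw [hsub, havg2, map_smul, map_add, map_sub, real_inner_smul_left, inner_add_left,
    inner_sub_right, inner_sub_right, real_inner_comm (grad (φ k)) (grad (φ (k + 1)))]
  simp only [modifiedEnergy]
  ring
end

section
/- Let 0 < α < 1 and T > 0, and let u : [0,T] → ℝ be continuous. Then the double integral ∫₀^T ∫₀^t (t - s)^{-α} u(s) u(t) ds dt is nonnegative. (Positive definiteness of the Riemann–Liouville power kernel.) -/
open MeasureTheory Real Set intervalIntegral Function

lemma gammaScaled_integrable {α c : ℝ} (hα : 0 < α) (hc : 0 < c) :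
    IntegrableOn (fun θ : ℝ => θ ^ (α - 1) * Real.exp (-(c * θ))) (Set.Ioi 0) := by
  have h0 : IntegrableOn (fun x : ℝ => Real.exp (-x) * x ^ (α - 1)) (Set.Ioi 0) :=
    Real.GammaIntegral_convergent hα
  rw [show (0:ℝ) = c * 0 by ring] at h0
  have h1 := (MeasureTheory.integrableOn_Ioi_comp_mul_left_iff
      (fun x : ℝ => Real.exp (-x) * x ^ (α - 1)) 0 hc).mpr h0
  have h2 : IntegrableOn
      (fun x : ℝ => c ^ (1 - α) * (Real.exp (-(c * x)) * (c * x) ^ (α - 1))) (Set.Ioi 0) :=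
    h1.const_mul (c ^ (1 - α))
  refine h2.congr_fun (fun θ hθ => ?_) measurableSet_Ioi
  have hθ0 : (0:ℝ) < θ := hθ
  dsimp only
  rw [Real.mul_rpow hc.le hθ0.le, Real.rpow_sub hc, Real.rpow_one, Real.rpow_sub hc,
    Real.rpow_one]
  field_simp

lemma gammaScaled_integral {α c : ℝ} (hα : 0 < α) (hc : 0 < c) :
    ∫ θ in Set.Ioi (0:ℝ), θ ^ (α - 1) * Real.exp (-(c * θ)) = Real.Gamma α * c ^ (-α) := by
  rw [Real.integral_rpow_mul_exp_neg_mul_Ioi hα hc, one_div, ← Real.rpow_neg_one c,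
    ← Real.rpow_mul hc.le, mul_comm]
  norm_num


lemma expPos {T θ : ℝ} (hT : 0 ≤ T) (hθ : 0 < θ) {U : ℝ → ℝ} (hU : Continuous U) :
    0 ≤ ∫ t in (0:ℝ)..T, (∫ s in (0:ℝ)..t, Real.exp (-((t - s) * θ)) * U s) * U t := by
  set w : ℝ → ℝ := fun s => Real.exp (θ * s) * U s with hw
  have hwc : Continuous w := by fun_prop
  set v : ℝ → ℝ := fun t => ∫ s in (0:ℝ)..t, w s with hv
  have hvd : ∀ t : ℝ, HasDerivAt v (w t) t := by
    intro t
    exact intervalIntegral.integral_hasDerivAt_right (hwc.intervalIntegrable _ _)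
      hwc.stronglyMeasurable.stronglyMeasurableAtFilter hwc.continuousAt
  have hvc : Continuous v := continuous_iff_continuousAt.mpr fun t => (hvd t).continuousAt
  -- inner integral equals exp(-(θ t)) * v t
  have hinner : ∀ t : ℝ, (∫ s in (0:ℝ)..t, Real.exp (-((t - s) * θ)) * U s)
      = Real.exp (-(θ * t)) * v t := by
    intro t
    rw [hv]
    rw [← intervalIntegral.integral_const_mul]
    refine intervalIntegral.integral_congr (fun s _ => ?_)
    rw [hw]
    rw [← mul_assoc, ← Real.exp_add]
    ring_nf
  set f : ℝ → ℝ := fun t => Real.exp (-(2 * θ * t)) * (v t) ^ 2 / 2 with hf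
  have hfd : ∀ t : ℝ, HasDerivAt f
      (Real.exp (-(θ * t)) * v t * U t - θ * (Real.exp (-(θ * t)) * v t) ^ 2) t := by
    intro t
    have h1 : HasDerivAt (fun t => Real.exp (-(2 * θ * t))) (-(2*θ) * Real.exp (-(2 * θ * t))) t := by
      have := (Real.hasDerivAt_exp (-(2 * θ * t)))
      have h2 : HasDerivAt (fun t : ℝ => -(2 * θ * t)) (-(2*θ)) t := by
        simpa [Pi.neg_def] using ((hasDerivAt_id t).const_mul (2*θ)).neg
      simpa [mul_comm, Function.comp_def] using this.comp t h2
    have h3 : HasDerivAt (fun t => (v t) ^ 2) (2 * v t * w t) t := by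
      simpa [mul_comm, mul_assoc, Pi.pow_def] using ((hvd t).pow 2)
    have h4 := (h1.mul h3).div_const 2
    refine h4.congr_deriv ?_
    symm
    rw [hw]
    have he : Real.exp (-(2 * θ * t)) = Real.exp (-(θ * t)) * Real.exp (-(θ * t)) := by
      rw [← Real.exp_add]; ring_nf
    have he2 : Real.exp (-(θ*t)) * Real.exp (θ * t) = 1 := by
      rw [← Real.exp_add]; simp
    linear_combination (θ * v t ^ 2 - v t * Real.exp (θ * t) * U t) * he -
      (Real.exp (-(θ * t)) * v t * U t) * he2
  -- rewrite main integral
  have key : (∫ t in (0:ℝ)..T, (∫ s in (0:ℝ)..t, Real.exp (-((t - s) * θ)) * U s) * U t)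
      = (∫ t in (0:ℝ)..T, (Real.exp (-(θ * t)) * v t * U t - θ * (Real.exp (-(θ * t)) * v t) ^ 2))
        + θ * ∫ t in (0:ℝ)..T, (Real.exp (-(θ * t)) * v t) ^ 2 := by
    rw [← intervalIntegral.integral_const_mul, ← intervalIntegral.integral_add]
    · refine intervalIntegral.integral_congr (fun t _ => ?_)
      rw [hinner t]; ring
    · apply Continuous.intervalIntegrable
      fun_prop
    · apply Continuous.intervalIntegrable
      fun_prop
  rw [key]
  have hftc : (∫ t in (0:ℝ)..T, (Real.exp (-(θ * t)) * v t * U t - θ * (Real.exp (-(θ * t)) * v t) ^ 2))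
      = f T - f 0 := by
    refine intervalIntegral.integral_eq_sub_of_hasDerivAt (fun t _ => hfd t) ?_
    apply Continuous.intervalIntegrable
    fun_prop
  rw [hftc]
  have hf0 : f 0 = 0 := by
    simp [hf, hv, intervalIntegral.integral_same]
  have hfT : 0 ≤ f T := by positivity
  have hsq : 0 ≤ ∫ t in (0:ℝ)..T, (Real.exp (-(θ * t)) * v t) ^ 2 :=
    intervalIntegral.integral_nonneg hT (fun t _ => sq_nonneg _)
  nlinarith


set_option maxHeartbeats 1000000 in
lemma main_pos {α T : ℝ} (hα0 : 0 < α) (hα1 : α < 1) (hT : 0 < T)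
    {U : ℝ → ℝ} (hU : Continuous U) :
    0 ≤ ∫ t in (0:ℝ)..T, ∫ s in (0:ℝ)..t, (t - s) ^ (-α) * U s * U t := by
  obtain ⟨M, hM⟩ := isCompact_Icc.exists_bound_of_continuousOn
    (hU.continuousOn : ContinuousOn U (Icc (0:ℝ) T))
  have hM0 : 0 ≤ M := le_trans (norm_nonneg (U 0)) (hM 0 ⟨le_refl _, hT.le⟩)
  have hΓ : 0 < Real.Gamma α := Real.Gamma_pos_of_pos hα0
  have hK : ∀ t : ℝ, 0 ≤ t → IntegrableOn (fun s => (t - s) ^ (-α)) (Ioc 0 t) := by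
    intro t ht
    have base : IntervalIntegrable (fun x : ℝ => x ^ (-α)) volume 0 t :=
      intervalIntegrable_rpow' (by linarith)
    have h2 := (base.comp_sub_left t).symm
    rw [sub_self, sub_zero] at h2
    exact (intervalIntegrable_iff_integrableOn_Ioc_of_le ht).mp h2
  have hIcont : Continuous fun p : ℝ × ℝ =>
      ∫ s in (0:ℝ)..p.1, Real.exp (-((p.1 - s) * p.2)) * U s := by
    apply intervalIntegral.continuous_parametric_intervalIntegral_of_continuous
      (f := fun (p : ℝ × ℝ) (s : ℝ) => Real.exp (-((p.1 - s) * p.2)) * U s)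
    · fun_prop
    · exact continuous_fst
  have hIe : ∀ (t θ : ℝ), 0 < θ →
      (∫ s in (0:ℝ)..t, Real.exp (-((t - s) * θ))) = θ⁻¹ * (1 - Real.exp (-(t * θ))) := by
    intro t θ hθ
    have hF : ∀ s : ℝ, HasDerivAt (fun s => θ⁻¹ * Real.exp (-((t - s) * θ)))
        (Real.exp (-((t - s) * θ))) s := by
      intro s
      have h1 : HasDerivAt (fun s : ℝ => -((t - s) * θ)) θ s := by
        simpa [Pi.neg_def] using (((hasDerivAt_id s).const_sub t).mul_const θ).neg
      have h3 := ((Real.hasDerivAt_exp (-((t - s) * θ))).comp s h1).const_mul θ⁻¹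
      exact h3.congr_deriv (by field_simp)
    rw [intervalIntegral.integral_eq_sub_of_hasDerivAt (fun s _ => hF s)
      (Continuous.intervalIntegrable (by fun_prop) _ _)]
    simp only [sub_self, zero_mul, neg_zero, Real.exp_zero, sub_zero]
    ring
  -- bound on inner integral
  have hIbound : ∀ t ∈ Icc (0:ℝ) T, ∀ θ : ℝ, 0 < θ →
      ‖∫ s in (0:ℝ)..t, Real.exp (-((t - s) * θ)) * U s‖ ≤ M * min t θ⁻¹ := by
    intro t ht θ hθ
    have hb1 : ‖∫ s in (0:ℝ)..t, Real.exp (-((t - s) * θ)) * U s‖ ≤ M * t := by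
      have := intervalIntegral.norm_integral_le_of_norm_le_const (C := M)
        (f := fun s => Real.exp (-((t - s) * θ)) * U s) (a := 0) (b := t) ?_
      · calc ‖∫ s in (0:ℝ)..t, Real.exp (-((t - s) * θ)) * U s‖ ≤ M * |t - 0| := this
          _ = M * t := by rw [sub_zero, abs_of_nonneg ht.1]
      · intro x hx
        rw [Set.uIoc_of_le ht.1] at hx
        have hx1 : x ∈ Icc (0:ℝ) T := ⟨hx.1.le, hx.2.trans ht.2⟩
        have he : Real.exp (-((t - x) * θ)) ≤ 1 := by
          apply Real.exp_le_one_iff.mpr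
          have : 0 ≤ (t - x) * θ := mul_nonneg (by linarith [hx.2]) hθ.le
          linarith
        calc ‖Real.exp (-((t - x) * θ)) * U x‖
            = Real.exp (-((t - x) * θ)) * ‖U x‖ := by
              rw [norm_mul, Real.norm_eq_abs, abs_of_pos (Real.exp_pos _)]
          _ ≤ 1 * M := mul_le_mul he (hM x hx1) (norm_nonneg _) one_pos.le
          _ = M := one_mul M
    have hb2 : ‖∫ s in (0:ℝ)..t, Real.exp (-((t - s) * θ)) * U s‖ ≤ M * θ⁻¹ := by
      have hg : IntervalIntegrable (fun s => M * Real.exp (-((t - s) * θ))) volume 0 t :=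
        Continuous.intervalIntegrable (by fun_prop) _ _
      have h1 := intervalIntegral.norm_integral_le_abs_of_norm_le
        (f := fun s => Real.exp (-((t - s) * θ)) * U s)
        (g := fun s => M * Real.exp (-((t - s) * θ))) (μ := volume) (a := 0) (b := t) ?_ hg
      · have h2 : (∫ s in (0:ℝ)..t, M * Real.exp (-((t - s) * θ)))
            = M * (θ⁻¹ * (1 - Real.exp (-(t * θ)))) := by
          rw [intervalIntegral.integral_const_mul, hIe t θ hθ]
        have he1 : Real.exp (-(t * θ)) ≤ 1 :=
          Real.exp_le_one_iff.mpr (by nlinarith [mul_nonneg ht.1 hθ.le])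
        have he0 : 0 < Real.exp (-(t * θ)) := Real.exp_pos _
        refine h1.trans ?_
        rw [h2, abs_of_nonneg (by nlinarith [mul_nonneg (mul_nonneg hM0 (inv_pos.mpr hθ).le) (by linarith : (0:ℝ) ≤ 1 - rexp (-(t * θ)))])]
        have hθi : 0 < θ⁻¹ := inv_pos.mpr hθ
        nlinarith [mul_nonneg (mul_nonneg hM0 hθi.le) he0.le]
      · filter_upwards [ae_restrict_mem measurableSet_uIoc] with s hs
        rw [Set.uIoc_of_le ht.1] at hs
        have hs1 : s ∈ Icc (0:ℝ) T := ⟨hs.1.le, hs.2.trans ht.2⟩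
        calc ‖Real.exp (-((t - s) * θ)) * U s‖
            = Real.exp (-((t - s) * θ)) * ‖U s‖ := by
              rw [norm_mul, Real.norm_eq_abs (Real.exp _), abs_of_pos (Real.exp_pos _)]
          _ ≤ Real.exp (-((t - s) * θ)) * M := by
              exact mul_le_mul_of_nonneg_left (hM s hs1) (Real.exp_pos _).le
          _ = M * Real.exp (-((t - s) * θ)) := mul_comm _ _
    rcases min_cases t θ⁻¹ with ⟨hmin, _⟩ | ⟨hmin, _⟩ <;> rw [hmin]
    · exact hb1
    · exact hb2
  have hmaj : IntegrableOn (fun θ : ℝ => M * M * (θ ^ (α - 1) * min T θ⁻¹)) (Ioi 0) := by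
    have base : IntegrableOn (fun θ : ℝ => θ ^ (α - 1) * min T θ⁻¹) (Ioi 0) := by
      have hsplit : Ioi (0:ℝ) = Ioc 0 1 ∪ Ioi 1 := (Set.Ioc_union_Ioi_eq_Ioi zero_le_one).symm
      rw [hsplit]
      apply IntegrableOn.union
      · -- on Ioc 0 1
        have hint : IntegrableOn (fun θ : ℝ => T * θ ^ (α - 1)) (Ioc 0 1) := by
          have h0 : IntervalIntegrable (fun x : ℝ => x ^ (α - 1)) volume 0 1 :=
            intervalIntegrable_rpow' (by linarith)
          exact ((intervalIntegrable_iff_integrableOn_Ioc_of_le zero_le_one).mp h0).const_mul T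
        refine hint.mono' ?_ ?_
        · apply Measurable.aestronglyMeasurable; fun_prop
        · filter_upwards [ae_restrict_mem measurableSet_Ioc] with θ hθ
          have hθ0 : (0:ℝ) < θ := hθ.1
          have h1 : (0:ℝ) < θ ^ (α - 1) := Real.rpow_pos_of_pos hθ0 _
          have h2 : (0:ℝ) ≤ min T θ⁻¹ := le_min hT.le (inv_pos.mpr hθ0).le
          rw [Real.norm_eq_abs, abs_of_nonneg (by positivity)]
          calc θ ^ (α - 1) * min T θ⁻¹ ≤ θ ^ (α - 1) * T :=
                mul_le_mul_of_nonneg_left (min_le_left _ _) h1.le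
            _ = T * θ ^ (α - 1) := mul_comm _ _
      · -- on Ioi 1
        have hint : IntegrableOn (fun θ : ℝ => θ ^ (α - 2)) (Ioi 1) :=
          integrableOn_Ioi_rpow_of_lt (by linarith) one_pos
        refine hint.mono' ?_ ?_
        · apply Measurable.aestronglyMeasurable; fun_prop
        · filter_upwards [ae_restrict_mem measurableSet_Ioi] with θ hθ
          have hθ0 : (0:ℝ) < θ := lt_trans one_pos hθ
          have h1 : (0:ℝ) < θ ^ (α - 1) := Real.rpow_pos_of_pos hθ0 _
          have h2 : (0:ℝ) ≤ min T θ⁻¹ := le_min hT.le (inv_pos.mpr hθ0).le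
          rw [Real.norm_eq_abs, abs_of_nonneg (by positivity)]
          calc θ ^ (α - 1) * min T θ⁻¹ ≤ θ ^ (α - 1) * θ⁻¹ :=
                mul_le_mul_of_nonneg_left (min_le_right _ _) h1.le
            _ = θ ^ (α - 2) := by
                rw [← Real.rpow_neg_one θ, ← Real.rpow_add hθ0]
                norm_num
                ring_nf
    exact base.const_mul (M * M)
  have swap1 : ∀ t ∈ Ioc (0:ℝ) T,
      (∫ s in Ioc (0:ℝ) t, (t - s) ^ (-α) * U s)
        = (Real.Gamma α)⁻¹ * ∫ θ in Ioi (0:ℝ),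
            θ ^ (α - 1) * ∫ s in Ioc (0:ℝ) t, Real.exp (-((t - s) * θ)) * U s := by
    intro t ht
    set f : ℝ → ℝ → ℝ := fun s θ => θ ^ (α - 1) * Real.exp (-((t - s) * θ)) * U s with hfdef
    have hne : ∀ᵐ s ∂(volume.restrict (Ioc (0:ℝ) t)), s ≠ t := by
      refine ae_restrict_of_ae ?_
      rw [ae_iff]
      have : {x : ℝ | ¬ x ≠ t} = {t} := by ext x; simp
      rw [this]
      exact measure_singleton t
    have hmeas : AEStronglyMeasurable (uncurry f)
        ((volume.restrict (Ioc (0:ℝ) t)).prod (volume.restrict (Ioi (0:ℝ)))) := by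
      apply Measurable.aestronglyMeasurable
      have : Measurable fun p : ℝ × ℝ =>
          p.2 ^ (α - 1) * Real.exp (-((t - p.1) * p.2)) * U p.1 := by fun_prop
      exact this
    have hf_int : Integrable (uncurry f)
        ((volume.restrict (Ioc (0:ℝ) t)).prod (volume.restrict (Ioi (0:ℝ)))) := by
      rw [MeasureTheory.integrable_prod_iff hmeas]
      constructor
      · filter_upwards [ae_restrict_mem measurableSet_Ioc, hne] with s hs hsne
        have hc : 0 < t - s := sub_pos.mpr (lt_of_le_of_ne hs.2 hsne)
        exact (gammaScaled_integrable hα0 hc).mul_const (U s)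
      · refine (((hK t ht.1.le).const_mul (Real.Gamma α)).mul_const M).mono'
          (hmeas.norm.integral_prod_right') ?_
        filter_upwards [ae_restrict_mem measurableSet_Ioc, hne] with s hs hsne
        have hc : 0 < t - s := sub_pos.mpr (lt_of_le_of_ne hs.2 hsne)
        have hsIcc : s ∈ Icc (0:ℝ) T := ⟨hs.1.le, le_trans hs.2 ht.2⟩
        have heq : (∫ θ in Ioi (0:ℝ), ‖f s θ‖)
            = Real.Gamma α * (t - s) ^ (-α) * ‖U s‖ := by
          rw [← gammaScaled_integral hα0 hc, ← MeasureTheory.integral_mul_const]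
          refine setIntegral_congr_fun measurableSet_Ioi (fun θ hθ => ?_)
          have hθ0 : (0:ℝ) < θ := hθ
          simp only [hfdef, norm_mul, Real.norm_eq_abs]
          rw [abs_of_pos (Real.rpow_pos_of_pos hθ0 _), abs_of_pos (Real.exp_pos _)]
        simp only [Function.uncurry_apply_pair]
        rw [Real.norm_eq_abs, heq, abs_of_nonneg (by positivity)]
        have hk0 : (0:ℝ) < (t - s) ^ (-α) := Real.rpow_pos_of_pos hc _
        calc Real.Gamma α * (t - s) ^ (-α) * ‖U s‖
            ≤ Real.Gamma α * (t - s) ^ (-α) * M := by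
              exact mul_le_mul_of_nonneg_left (hM s hsIcc) (by positivity)
          _ = Real.Gamma α * ((t - s) ^ (-α)) * M := by ring
    calc (∫ s in Ioc (0:ℝ) t, (t - s) ^ (-α) * U s)
        = ∫ s in Ioc (0:ℝ) t, (Real.Gamma α)⁻¹ * ∫ θ in Ioi (0:ℝ), f s θ := by
          refine setIntegral_congr_ae measurableSet_Ioc ?_
          filter_upwards [(by
            rw [ae_iff]
            have : {x : ℝ | ¬ x ≠ t} = {t} := by ext x; simp
            rw [this]; exact measure_singleton t : ∀ᵐ s : ℝ, s ≠ t)] with s hsne hs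
          have hc : 0 < t - s := sub_pos.mpr (lt_of_le_of_ne hs.2 hsne)
          have : (∫ θ in Ioi (0:ℝ), f s θ)
              = (Real.Gamma α * (t - s) ^ (-α)) * U s := by
            rw [← gammaScaled_integral hα0 hc, ← MeasureTheory.integral_mul_const]
          rw [this]
          field_simp
      _ = (Real.Gamma α)⁻¹ * ∫ s in Ioc (0:ℝ) t, ∫ θ in Ioi (0:ℝ), f s θ :=
          MeasureTheory.integral_const_mul _ _
      _ = (Real.Gamma α)⁻¹ * ∫ θ in Ioi (0:ℝ), ∫ s in Ioc (0:ℝ) t, f s θ := by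
          rw [MeasureTheory.integral_integral_swap hf_int]
      _ = (Real.Gamma α)⁻¹ * ∫ θ in Ioi (0:ℝ),
            θ ^ (α - 1) * ∫ s in Ioc (0:ℝ) t, Real.exp (-((t - s) * θ)) * U s := by
          congr 1
          refine setIntegral_congr_fun measurableSet_Ioi (fun θ hθ => ?_)
          rw [← MeasureTheory.integral_const_mul]
          refine setIntegral_congr_fun measurableSet_Ioc (fun s hs => ?_)
          simp [hfdef]; ring
  -- define F and prove product integrability
  set F : ℝ → ℝ → ℝ := fun t θ =>
    θ ^ (α - 1) * (∫ s in (0:ℝ)..t, Real.exp (-((t - s) * θ)) * U s) * U t with hFdef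
  have hFmeas : AEStronglyMeasurable (uncurry F)
      ((volume.restrict (Ioc (0:ℝ) T)).prod (volume.restrict (Ioi (0:ℝ)))) := by
    apply Measurable.aestronglyMeasurable
    exact (((by fun_prop : Measurable fun p : ℝ × ℝ => p.2 ^ (α - 1))).mul
      hIcont.measurable).mul (hU.comp continuous_fst).measurable
  have hslice : ∀ t ∈ Ioc (0:ℝ) T, ∀ᵐ θ ∂(volume.restrict (Ioi (0:ℝ))),
      ‖F t θ‖ ≤ M * M * (θ ^ (α - 1) * min T θ⁻¹) := by
    intro t ht
    filter_upwards [ae_restrict_mem measurableSet_Ioi] with θ hθ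
    have hθ0 : (0:ℝ) < θ := hθ
    have htIcc : t ∈ Icc (0:ℝ) T := ⟨ht.1.le, ht.2⟩
    have h1 : (0:ℝ) < θ ^ (α - 1) := Real.rpow_pos_of_pos hθ0 _
    calc ‖F t θ‖ = θ ^ (α - 1) * ‖∫ s in (0:ℝ)..t, Real.exp (-((t - s) * θ)) * U s‖ * ‖U t‖ := by
          simp only [hFdef, norm_mul, Real.norm_eq_abs (θ ^ (α - 1)), abs_of_pos h1]
      _ ≤ θ ^ (α - 1) * (M * min t θ⁻¹) * M := by
          refine mul_le_mul (mul_le_mul_of_nonneg_left (hIbound t htIcc θ hθ0) h1.le)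
            (hM t htIcc) (norm_nonneg _) ?_
          exact mul_nonneg h1.le (mul_nonneg hM0 (le_min htIcc.1 (inv_pos.mpr hθ0).le))
      _ = M * M * (θ ^ (α - 1) * min t θ⁻¹) := by ring
      _ ≤ M * M * (θ ^ (α - 1) * min T θ⁻¹) :=
          mul_le_mul_of_nonneg_left (mul_le_mul_of_nonneg_left (min_le_min ht.2 le_rfl) h1.le)
            (by positivity)
  have hFslice_int : ∀ t ∈ Ioc (0:ℝ) T,
      Integrable (fun θ => F t θ) (volume.restrict (Ioi (0:ℝ))) := by
    intro t ht
    refine hmaj.mono' ?_ (hslice t ht)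
    apply Measurable.aestronglyMeasurable
    exact (((by fun_prop : Measurable fun θ : ℝ => θ ^ (α - 1))).mul
      (hIcont.comp (continuous_const.prodMk continuous_id)).measurable).mul measurable_const
  have hF_int : Integrable (uncurry F)
      ((volume.restrict (Ioc (0:ℝ) T)).prod (volume.restrict (Ioi (0:ℝ)))) := by
    rw [MeasureTheory.integrable_prod_iff hFmeas]
    constructor
    · filter_upwards [ae_restrict_mem measurableSet_Ioc] with t ht
      exact hFslice_int t ht
    · have hconst : IntegrableOn
          (fun _ : ℝ => (∫ θ in Ioi (0:ℝ), M * M * (θ ^ (α - 1) * min T θ⁻¹)))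
          (Ioc (0:ℝ) T) := integrableOn_const measure_Ioc_lt_top.ne
      refine hconst.mono' (hFmeas.norm.integral_prod_right') ?_
      filter_upwards [ae_restrict_mem measurableSet_Ioc] with t ht
      simp only [Function.uncurry_apply_pair]
      rw [Real.norm_eq_abs, abs_of_nonneg (integral_nonneg (fun θ => norm_nonneg _))]
      exact integral_mono_ae ((hFslice_int t ht).norm) hmaj (hslice t ht)
  -- main computation
  have key : (∫ t in (0:ℝ)..T, ∫ s in (0:ℝ)..t, (t - s) ^ (-α) * U s * U t)
      = (Real.Gamma α)⁻¹ * ∫ θ in Ioi (0:ℝ), ∫ t in Ioc (0:ℝ) T, F t θ := by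
    rw [intervalIntegral.integral_of_le hT.le, ← MeasureTheory.integral_integral_swap hF_int,
      ← MeasureTheory.integral_const_mul]
    refine setIntegral_congr_fun measurableSet_Ioc (fun t ht => ?_)
    have h1 : (∫ s in (0:ℝ)..t, (t - s) ^ (-α) * U s * U t)
        = (∫ s in (0:ℝ)..t, (t - s) ^ (-α) * U s) * U t :=
      intervalIntegral.integral_mul_const _ _
    rw [h1, intervalIntegral.integral_of_le ht.1.le, swap1 t ht]
    rw [mul_assoc, ← MeasureTheory.integral_mul_const]
    congr 1
    refine setIntegral_congr_fun measurableSet_Ioi (fun θ hθ => ?_)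
    rw [hFdef]
    simp only
    rw [intervalIntegral.integral_of_le ht.1.le]
  rw [key]
  apply mul_nonneg (inv_nonneg.mpr hΓ.le)
  apply setIntegral_nonneg measurableSet_Ioi
  intro θ hθ
  have hθ0 : (0:ℝ) < θ := hθ
  have h1 : (∫ t in Ioc (0:ℝ) T, F t θ)
      = θ ^ (α - 1) * ∫ t in (0:ℝ)..T,
          (∫ s in (0:ℝ)..t, Real.exp (-((t - s) * θ)) * U s) * U t := by
    rw [← intervalIntegral.integral_const_mul, intervalIntegral.integral_of_le hT.le]
    refine setIntegral_congr_fun measurableSet_Ioc (fun t ht => ?_)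
    rw [hFdef]
    simp only
    ring
  rw [h1]
  exact mul_nonneg (Real.rpow_pos_of_pos hθ0 _).le (expPos hT.le hθ0 hU)

theorem stmt_14 (α : ℝ) (hα0 : 0 < α) (hα1 : α < 1) (T : ℝ) (hT : 0 < T)
    (u : ℝ → ℝ) (hu : ContinuousOn u (Set.Icc 0 T)) :
    0 ≤ ∫ t in (0 : ℝ)..T, ∫ s in (0 : ℝ)..t, (t - s) ^ (-α) * u s * u t := by
  set U : ℝ → ℝ := fun x => u (min (max x 0) T) with hUdef
  have hUc : Continuous U := by
    apply hu.comp_continuous (by fun_prop)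
    intro x
    exact ⟨le_min (le_max_right _ _) hT.le, min_le_right _ _⟩
  have hUeq : ∀ x ∈ Set.Icc (0:ℝ) T, U x = u x := by
    intro x hx
    rw [hUdef]
    simp only
    rw [max_eq_left hx.1, min_eq_left hx.2]
  have hcongr : (∫ t in (0 : ℝ)..T, ∫ s in (0 : ℝ)..t, (t - s) ^ (-α) * u s * u t)
      = ∫ t in (0 : ℝ)..T, ∫ s in (0 : ℝ)..t, (t - s) ^ (-α) * U s * U t := by
    refine intervalIntegral.integral_congr (fun t ht => ?_)
    rw [Set.uIcc_of_le hT.le] at ht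
    refine intervalIntegral.integral_congr (fun s hs => ?_)
    rw [Set.uIcc_of_le ht.1] at hs
    have hs' : s ∈ Set.Icc (0:ℝ) T := ⟨hs.1, hs.2.trans ht.2⟩
    rw [hUeq s hs', hUeq t ht]
  rw [hcongr]
  exact main_pos hα0 hα1 hT hUc
end
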